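/- Let T be the span of (undecorated-polynomial, i.e. Butcher–Connes–Kreimer) decorated rooted trees with grafting products ↷_a, and suppose M : T → T is a linear map whose adjoint M* satisfies M*(σ ↷_a τ) = (M*σ) ↷_a (M*τ) for all σ, τ, a (a multi-pre-Lie morphism). Define R* by R*(ζ_l) := M*(ζ_l) on generators and R*(σ ↷_a τ) := σ ↷_a (R*τ). Then R* is well-defined (by freeness of T over the generators under the grafting operations) and is a right ⋆-morphism: R*(σ ⋆ τ) = σ ⋆ R*(τ) for all σ, τ ∈ T, where ⋆ is the Guin–Oudom product of the grafting pre-Lie structure. -/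

import Mathlib

open scoped Classical

/-! ## Decorated rooted trees (planar representatives)

`MIdx dd = ℕ^dd` are the multi-indices (`dd = d+1` in the paper); a decorated
tree `DT Θ ν dd` has at each node a polynomial decoration `k : MIdx dd` and an
optional noise label `l : Option ν` (with `none` encoding `ζ_0 = 𝟏`), and edges
decorated by `(t, p) ∈ Θ × MIdx dd` with `Θ = 𝔗⁺` the set of operator types. -/

abbrev MIdx (dd : ℕ) := Fin dd → ℕ

/-- multi-index factorial -/
def mfact {dd : ℕ} (k : MIdx dd) : ℕ := ∏ i, (k i).factorial

/-- componentwise binomial coefficient, zero unless `m ≤ k` -/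
def binomM {dd : ℕ} (k m : MIdx dd) : ℕ := ∏ i, (k i).choose (m i)

/-- decorated rooted trees -/
inductive DT (Θ ν : Type) (dd : ℕ) : Type where
  | node (k : MIdx dd) (l : Option ν) (br : List ((Θ × MIdx dd) × DT Θ ν dd)) : DT Θ ν dd

/-- the linear span `T` of decorated trees -/
abbrev TT (Θ ν : Type) (dd : ℕ) := DT Θ ν dd →₀ ℚ

variable {Θ ν : Type} {dd : ℕ}

/-- a decorated tree as an element of `T` -/
noncomputable def δ (t : DT Θ ν dd) : TT Θ ν dd := Finsupp.single t 1

/-- the tree `X^k ζ_l` -/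
def Xzeta (k : MIdx dd) (l : Option ν) : DT Θ ν dd := .node k l []

/-- the noise tree `ζ_l` (`ζ_0 = 𝟏` for `l = none`) -/
def zeta (l : Option ν) : DT Θ ν dd := .node 0 l []

/-- the planted tree `I_a(t)` -/
def Itree (a : Θ × MIdx dd) (t : DT Θ ν dd) : DT Θ ν dd := .node 0 none [(a, t)]

/-- `I_a` as a linear operation on `T` -/
noncomputable def Iext (a : Θ × MIdx dd) (f : TT Θ ν dd) : TT Θ ν dd :=
  Finsupp.mapDomain (Itree a) f

/-- combine two linear combinations through a binary map -/
noncomputable def fcomb {α β γ : Type*} (h : α → β → γ)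
    (f : α →₀ ℚ) (g : β →₀ ℚ) : γ →₀ ℚ :=
  f.sum fun a c => g.sum fun b d => Finsupp.single (h a b) (c * d)

/-! ### Deformed grafting `σ ↷_a τ` -/

mutual
/-- deformed grafting `σ ↷_a τ = Σ_{v ∈ N_τ} Σ_m binom(n_v, m) σ ↷^v_{a−m} (↑_v^{−m} τ)`
(terms with a negative edge decoration vanish) -/
noncomputable def graftT (a : Θ × MIdx dd) (σ : DT Θ ν dd) : DT Θ ν dd → TT Θ ν dd
  | .node k l br =>
      (∑ m ∈ Finset.Icc 0 k,
        if m ≤ a.2 then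
          (binomM k m : ℚ) •
            Finsupp.single (DT.node (k - m) l (br ++ [((a.1, a.2 - m), σ)])) 1
        else 0) +
      Finsupp.mapDomain (fun br' => DT.node k l br') (graftL a σ br)

/-- grafting `σ` at a node of exactly one member of a list of branches -/
noncomputable def graftL (a : Θ × MIdx dd) (σ : DT Θ ν dd) :
    List ((Θ × MIdx dd) × DT Θ ν dd) → (List ((Θ × MIdx dd) × DT Θ ν dd) →₀ ℚ)
  | [] => 0
  | (e, t) :: ts =>
      Finsupp.mapDomain (fun t' => (e, t') :: ts) (graftT a σ t) +
        Finsupp.mapDomain ((e, t) :: ·) (graftL a σ ts)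
end

/-- bilinear extension of `↷_a` -/
noncomputable def graftExt (a : Θ × MIdx dd) (f g : TT Θ ν dd) : TT Θ ν dd :=
  f.sum fun s c => g.sum fun t d => (c * d) • graftT a s t

/-- extension of `σ ↷_a ·` in its right argument -/
noncomputable def graftR (a : Θ × MIdx dd) (σ : DT Θ ν dd) (g : TT Θ ν dd) : TT Θ ν dd :=
  g.sum fun t c => c • graftT a σ t

/-! ### Raising operators `↑^k` -/

mutual
/-- `↑^k τ = Σ_{Σ_v k_v = k} ∏_v ↑_v^{k_v} τ` : distribute the multi-index `k`
over the nodes of `τ`, raising decorations -/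
noncomputable def upT (k : MIdx dd) : DT Θ ν dd → TT Θ ν dd
  | .node k0 l br =>
      ∑ m ∈ Finset.Icc 0 k,
        Finsupp.mapDomain (fun br' => DT.node (k0 + m) l br') (upL (k - m) br)

/-- distribute a multi-index over the nodes of a list of branches -/
noncomputable def upL (k : MIdx dd) :
    List ((Θ × MIdx dd) × DT Θ ν dd) → (List ((Θ × MIdx dd) × DT Θ ν dd) →₀ ℚ)
  | [] => if k = 0 then Finsupp.single [] 1 else 0
  | (e, t) :: ts =>
      ∑ m ∈ Finset.Icc 0 k,
        fcomb (fun t' ts' => (e, t') :: ts') (upT m t) (upL (k - m) ts)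
end

/-- linear extension of `↑^k` -/
noncomputable def upExt (k : MIdx dd) (g : TT Θ ν dd) : TT Θ ν dd :=
  g.sum fun t c => c • upT k t

/-! ### The deformed (Guin–Oudom) product `⋆` -/

/-- all ways of splitting a list in two complementary sublists -/
def splittings {α : Type*} : List α → List (List α × List α)
  | [] => [([], [])]
  | a :: l => (splittings l).flatMap fun p => [(a :: p.1, p.2), (p.1, a :: p.2)]

/-- deformed attachment of a list of decorated branches at a node whose
polynomial decoration is `k` ; returns the distribution over
(new node decoration, attached branches) -/
noncomputable def mgRoot : List ((Θ × MIdx dd) × DT Θ ν dd) → MIdx dd →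
    ((MIdx dd × List ((Θ × MIdx dd) × DT Θ ν dd)) →₀ ℚ)
  | [], k => Finsupp.single (k, []) 1
  | (a, σ) :: rest, k =>
      ∑ m ∈ Finset.Icc 0 k,
        if m ≤ a.2 then
          (binomM k m : ℚ) •
            Finsupp.mapDomain (fun p => (p.1, ((a.1, a.2 - m), σ) :: p.2))
              (mgRoot rest (k - m))
        else 0

mutual
/-- multi-grafting with raising: graft all decorated branches of `br` at nodes of
`τ` (each independently of the others, none onto another), simultaneously
distributing the multi-index `kup` over the nodes of `τ` -/
noncomputable def mgT (br : List ((Θ × MIdx dd) × DT Θ ν dd)) (kup : MIdx dd) :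
    DT Θ ν dd → TT Θ ν dd
  | .node k l c =>
      ((splittings br).map fun s =>
        ∑ m ∈ Finset.Icc 0 kup,
          (mgRoot s.1 k).sum fun p (cc : ℚ) =>
            cc • Finsupp.mapDomain (fun c' => DT.node (p.1 + m) l (c' ++ p.2))
              (mgL s.2 (kup - m) c)).sum

/-- distribute branches to graft and a multi-index to raise over a list of branches -/
noncomputable def mgL (br : List ((Θ × MIdx dd) × DT Θ ν dd)) (kup : MIdx dd) :
    List ((Θ × MIdx dd) × DT Θ ν dd) → (List ((Θ × MIdx dd) × DT Θ ν dd) →₀ ℚ)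
  | [] => if br = [] ∧ kup = 0 then Finsupp.single [] 1 else 0
  | (e, t) :: ts =>
      ((splittings br).map fun s =>
        ∑ m ∈ Finset.Icc 0 kup,
          fcomb (fun t' ts' => (e, t') :: ts') (mgT s.1 m t) (mgL s.2 (kup - m) ts)).sum
end

/-- the deformed product `σ ⋆ τ = ↑^k_{N_τ} (∏_i I_{a_i}(σ_i) ↷ τ)` for
`σ = X^k ∏_i I_{a_i}(σ_i)` (the root noise label of `σ` plays no role: `⋆` is
used with noise-free left factors) -/
noncomputable def star (σ τ : DT Θ ν dd) : TT Θ ν dd :=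
  match σ with
  | .node k _ br => mgT br k τ

/-- extension of `σ ⋆ ·` in its right argument -/
noncomputable def starR (σ : DT Θ ν dd) (g : TT Θ ν dd) : TT Θ ν dd :=
  g.sum fun t c => c • star σ t

/-- a tree has no noise label at its root -/
def noiseFreeRoot : DT Θ ν dd → Prop
  | .node _ l _ => l = none

/-! ### Symmetry factor, pairing, tree product -/

/-- the symmetry factor `S(X^k ζ_l ∏_j I_{a_j}(τ_j)^{β_j}) = k! ∏_j S(τ_j)^{β_j} β_j!` -/
noncomputable def symF : DT Θ ν dd → ℕ
  | .node k _ br =>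
      mfact k * (br.attach.map fun p => symF p.1.2).prod *
        (br.dedup.map fun p => (br.count p).factorial).prod
decreasing_by
  have h1 : sizeOf p.1 < 1 + sizeOf br :=
    Nat.lt_of_lt_of_le (List.sizeOf_lt_of_mem p.2) (by omega)
  cases p ; cases ‹(Θ × MIdx dd) × DT Θ ν dd› ; simp_all ; omega

/-- the pairing `⟨σ, τ⟩ = S(τ) 1_{σ = τ}`, extended bilinearly -/
noncomputable def pairT (f g : TT Θ ν dd) : ℚ :=
  f.sum fun t c => (symF t : ℚ) * c * g t

/-- tree product: joining the roots -/
def treeMul : DT Θ ν dd → DT Θ ν dd → DT Θ ν dd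
  | .node k l br, .node k' l' br' => .node (k + k') (l.orElse fun _ => l') (br ++ br')

/-- bilinear extension of the tree product to `T` -/
noncomputable def mulExt (f g : TT Θ ν dd) : TT Θ ν dd :=
  f.sum fun s c => g.sum fun t d => Finsupp.single (treeMul s t) (c * d)

/-! ### Degree and number of noises -/

/-- number of noise symbols occurring in a tree -/
def nno : DT Θ ν dd → ℕ
  | .node _ l br => (if l.isSome then 1 else 0) + (br.attach.map fun p => nno p.1.2).sum
decreasing_by
  have h1 : sizeOf p.1 < 1 + sizeOf br :=
    Nat.lt_of_lt_of_le (List.sizeOf_lt_of_mem p.2) (by omega)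
  cases p ; cases ‹(Θ × MIdx dd) × DT Θ ν dd› ; simp_all ; omega

/-- the scaled size `|k|_s` of a multi-index -/
noncomputable def absIdx (s : Fin dd → ℕ) (k : MIdx dd) : ℝ := ∑ i, (s i : ℝ) * k i

/-- degree (homogeneity) of a decorated tree, for a scaling `s`, degrees `degO`
of the operator types and degrees `degN` of the noises -/
noncomputable def degT (s : Fin dd → ℕ) (degO : Θ → ℝ) (degN : ν → ℝ) :
    DT Θ ν dd → ℝ
  | .node k l br =>
      absIdx s k + (match l with | none => 0 | some x => degN x) +
        (br.attach.map fun p =>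
          degO p.1.1.1 - absIdx s p.1.1.2 + degT s degO degN p.1.2).sum
decreasing_by
  have h1 : sizeOf p.1 < 1 + sizeOf br :=
    Nat.lt_of_lt_of_le (List.sizeOf_lt_of_mem p.2) (by omega)
  cases p ; cases ‹(Θ × MIdx dd) × DT Θ ν dd› ; simp_all ; omega

/-! ### The coefficient map `F` -/

open MvPolynomial in
/-- the operator `∂^k = Σ_a Z_{a+k} D_a` on `ℚ[Z_a]`, `a ∈ Θ × ℕ^dd` (finite sum
over the variables occurring) -/
noncomputable def delK (k : MIdx dd) (G : MvPolynomial (Θ × MIdx dd) ℚ) :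
    MvPolynomial (Θ × MIdx dd) ℚ :=
  ∑ a ∈ G.vars, X (a.1, a.2 + k) * pderiv a G

/-- the coefficient map `F` : given the data `F0 i l = F_i(ζ_l) = F_i^l`, defined
inductively by `F_i(X^k ζ_l ∏_j I_{a_j}(τ_j)) = ∂^k D_{a_1}⋯D_{a_n} F_i(ζ_l) ∏_j F_{l_j}(τ_j)` -/
noncomputable def Fmap (F0 : Θ → Option ν → MvPolynomial (Θ × MIdx dd) ℚ) (i : Θ) :
    DT Θ ν dd → MvPolynomial (Θ × MIdx dd) ℚ
  | .node k l br =>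
      delK k (br.foldr (fun p P => MvPolynomial.pderiv p.1 P) (F0 i l)) *
        (br.attach.map fun p => Fmap F0 p.1.1.1 p.1.2).prod
decreasing_by
  have h1 : sizeOf p.1 < 1 + sizeOf br :=
    Nat.lt_of_lt_of_le (List.sizeOf_lt_of_mem p.2) (by omega)
  cases p ; cases ‹(Θ × MIdx dd) × DT Θ ν dd› ; simp_all ; omega

/-- linear extension of `F` to `T` -/
noncomputable def FmapL (F0 : Θ → Option ν → MvPolynomial (Θ × MIdx dd) ℚ) (i : Θ)
    (f : TT Θ ν dd) : MvPolynomial (Θ × MIdx dd) ℚ :=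
  f.sum fun t c => c • Fmap F0 i t


/-!
Without polynomial decorations there is no deformation, and `mgT br 0 τ` is the Guin–Oudom
product `br ⋆ τ` of the forest `br` with `τ`; every tree `X^k ζ_l ∏ᵢ I_{aᵢ}(τᵢ)` equals
`br ⋆ ζ_l` for its forest of branches `br`. The Guin–Oudom recursion
`x ↷_a (br ⋆ τ) = (br · I_a(x)) ⋆ τ + (x ↷_a br) ⋆ τ`, proved by mutual induction on trees and
forests, shows by induction on the length of `br` that every linear `R*` with
`R*(σ ↷_a τ) = σ ↷_a R*(τ)` satisfies `R*(br ⋆ τ) = br ⋆ R*(τ)`. This is the right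
`⋆`-morphism property; with `τ = ζ_l` it forces `R*(br ⋆ ζ_l) = br ⋆ R*(ζ_l)`, which gives
uniqueness, and the same recursion shows that this formula does satisfy the graft rule.
-/

open Finsupp

local notation "lc" => Finsupp.linearCombination ℚ

section LinearCombination

variable {α β γ M : Type*} [AddCommMonoid M] [Module ℚ M]

lemma linearCombination_δ (F : DT Θ ν dd → M) (t : DT Θ ν dd) : lc F (δ t) = F t := by
  simp [δ]

lemma linearCombination_congr {F G : α → M} {g : α →₀ ℚ} (h : ∀ t ∈ g.support, F t = G t) :
    lc F g = lc G g := by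
  simp only [linearCombination_apply]
  exact sum_congr fun t ht => by rw [h t ht]

lemma linearCombination_single_one (h : α → β) (g : α →₀ ℚ) :
    lc (fun t => single (h t) (1 : ℚ)) g = mapDomain h g := by
  induction g using Finsupp.induction_linear with
  | zero => simp
  | add f g hf hg => rw [map_add, hf, hg, mapDomain_add]
  | single a c => simp [mapDomain_single]

lemma linearCombination_δ_self (g : TT Θ ν dd) : lc δ g = g :=
  (linearCombination_single_one id g).trans mapDomain_id

lemma linearCombination_add_fun (F G : α → M) (g : α →₀ ℚ) :
    lc (fun t => F t + G t) g = lc F g + lc G g := by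
  simp only [linearCombination_apply, smul_add, sum_add]

lemma linearCombination_comm (H : α → β → M) (f : α →₀ ℚ) (g : β →₀ ℚ) :
    lc (fun a => lc (H a) g) f = lc (fun b => lc (fun a => H a b) f) g := by
  simp only [linearCombination_apply, smul_sum]
  rw [sum_comm]
  exact sum_congr fun _ _ => sum_congr fun _ _ => smul_comm _ _ _

lemma linearCombination_list_sum (l : List γ) (H : α → γ → M) (w : α →₀ ℚ) :
    lc (fun y => (l.map (H y)).sum) w = (l.map fun p => lc (fun y => H y p) w).sum := by
  induction l with
  | nil => simp [linearCombination_apply]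
  | cons p l ih => simp only [List.map_cons, List.sum_cons, linearCombination_add_fun, ih]

lemma linearCombination_mapDomain_comm (h : α → β → γ) (w : α →₀ ℚ) (W : β →₀ ℚ) :
    lc (fun a => mapDomain (h a) W) w = lc (fun b => mapDomain (fun a => h a b) w) W := by
  simp only [← linearCombination_single_one]
  exact linearCombination_comm _ w W

lemma mapDomain_linearCombination (h : β → γ) (F : α → β →₀ ℚ) (w : α →₀ ℚ) :
    mapDomain h (lc F w) = lc (fun a => mapDomain h (F a)) w :=
  apply_linearCombination ℚ (lmapDomain ℚ ℚ h) F w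

lemma fcomb_eq_linearCombination (h : α → β → γ) (f : α →₀ ℚ) (g : β →₀ ℚ) :
    fcomb h f g = lc (fun a => mapDomain (h a) g) f := by
  simp only [fcomb, linearCombination_apply, ← linearCombination_single_one, smul_sum,
    smul_single, smul_eq_mul, mul_one]

lemma fcomb_eq_linearCombination' (h : α → β → γ) (f : α →₀ ℚ) (g : β →₀ ℚ) :
    fcomb h f g = lc (fun b => mapDomain (fun a => h a b) f) g := by
  rw [fcomb_eq_linearCombination, linearCombination_mapDomain_comm]

lemma fcomb_add_left (h : α → β → γ) (f f' : α →₀ ℚ) (g : β →₀ ℚ) :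
    fcomb h (f + f') g = fcomb h f g + fcomb h f' g := by
  simp only [fcomb_eq_linearCombination, map_add]

lemma fcomb_add_right (h : α → β → γ) (f : α →₀ ℚ) (g g' : β →₀ ℚ) :
    fcomb h f (g + g') = fcomb h f g + fcomb h f g' := by
  simp only [fcomb_eq_linearCombination', map_add]

lemma fcomb_linearCombination_left {ι : Type*} (h : α → β → γ) (F : ι → α →₀ ℚ)
    (w : ι →₀ ℚ) (g : β →₀ ℚ) :
    fcomb h (lc F w) g = lc (fun y => fcomb h (F y) g) w := by
  simp only [fcomb_eq_linearCombination, linearCombination_linearCombination]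

lemma fcomb_linearCombination_right {ι : Type*} (h : α → β → γ) (f : α →₀ ℚ)
    (G : ι → β →₀ ℚ) (w : ι →₀ ℚ) :
    fcomb h f (lc G w) = lc (fun y => fcomb h f (G y)) w := by
  simp only [fcomb_eq_linearCombination', linearCombination_linearCombination]

end LinearCombination

section Splittings

variable {α M : Type*} [AddCommMonoid M]

def sumSplittings (bs : List α) (F : List α × List α → M) : M := ((splittings bs).map F).sum

lemma sumSplittings_nil (F : List α × List α → M) : sumSplittings [] F = F ([], []) := by
  simp [sumSplittings, splittings]

lemma sumSplittings_cons (a : α) (bs : List α) (F : List α × List α → M) :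
    sumSplittings (a :: bs) F =
      sumSplittings bs fun p => F (a :: p.1, p.2) + F (p.1, a :: p.2) := by
  unfold sumSplittings
  rw [splittings]
  induction splittings bs with
  | nil => simp
  | cons p l ih => simp [ih, add_assoc]

lemma sumSplittings_add (bs : List α) (F G : List α × List α → M) :
    sumSplittings bs (fun p => F p + G p) = sumSplittings bs F + sumSplittings bs G := by
  simp [sumSplittings, List.sum_map_add]

lemma sumSplittings_congr (bs : List α) {F G : List α × List α → M} (h : ∀ p, F p = G p) :
    sumSplittings bs F = sumSplittings bs G :=
  congrArg (sumSplittings bs) (funext h)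

lemma sumSplittings_append_singleton (b : α) (bs : List α) (F : List α × List α → M) :
    sumSplittings (bs ++ [b]) F =
      sumSplittings bs fun p => F (p.1 ++ [b], p.2) + F (p.1, p.2 ++ [b]) := by
  induction bs generalizing F with
  | nil => simp [sumSplittings_cons, sumSplittings_nil]
  | cons a bs ih =>
    rw [List.cons_append, sumSplittings_cons, ih, sumSplittings_cons]
    refine sumSplittings_congr _ fun p => ?_
    simp only [List.cons_append]
    abel

lemma sumSplittings_eq_of_zero_of_snd_ne_nil (bs : List α) (F : List α × List α → M)
    (h : ∀ p : List α × List α, p.2 ≠ [] → F p = 0) : sumSplittings bs F = F (bs, []) := by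
  induction bs generalizing F with
  | nil => exact sumSplittings_nil F
  | cons a bs ih =>
    rw [sumSplittings_cons, ← ih (fun p => F (a :: p.1, p.2)) fun p hp => h _ hp]
    exact sumSplittings_congr _ fun p => by rw [h (p.1, a :: p.2) (by simp), add_zero]

lemma map_sumSplittings {N : Type*} [AddCommMonoid N] [Module ℚ M] [Module ℚ N]
    (Φ : M →ₗ[ℚ] N) (bs : List α) (F : List α × List α → M) :
    Φ (sumSplittings bs F) = sumSplittings bs fun p => Φ (F p) := by
  simp only [sumSplittings, map_list_sum, List.map_map]
  rfl

lemma linearCombination_sumSplittings {β : Type*} [Module ℚ M] (bs : List α)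
    (H : β → List α × List α → M) (w : β →₀ ℚ) :
    lc (fun y => sumSplittings bs (H y)) w = sumSplittings bs fun p => lc (fun y => H y p) w :=
  linearCombination_list_sum _ _ _

end Splittings

local notation "Branch" => (Θ × MIdx 0) × DT Θ ν 0

lemma MIdx.eq_zero (k : MIdx 0) : k = 0 := Subsingleton.elim _ _

lemma binomM_eq_one (k m : MIdx 0) : binomM k m = 1 := by simp [binomM]

lemma MIdx.Icc_eq (k m : MIdx 0) : Finset.Icc k m = {0} := by
  rw [MIdx.eq_zero k, MIdx.eq_zero m, Finset.Icc_self]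

lemma graftT_node (a : Θ × MIdx 0) (σ : DT Θ ν 0) (k : MIdx 0) (l : Option ν) (br : List Branch) :
    graftT a σ (.node k l br) =
      δ (.node k l (br ++ [(a, σ)])) + mapDomain (.node k l) (graftL a σ br) := by
  rw [graftT, MIdx.Icc_eq, Finset.sum_singleton, if_pos (le_of_eq (Subsingleton.elim _ _)),
    binomM_eq_one, Subsingleton.elim (k - 0) k, Subsingleton.elim (a.2 - 0) a.2]
  simp [δ]

lemma mgRoot_eq_single (bs : List Branch) (k : MIdx 0) : mgRoot bs k = single (k, bs) 1 := by
  induction bs with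
  | nil => rw [mgRoot]
  | cons b bs ih =>
    rw [mgRoot, MIdx.Icc_eq, Finset.sum_singleton, if_pos (le_of_eq (Subsingleton.elim _ _)),
      binomM_eq_one, Subsingleton.elim (k - 0) k, Subsingleton.elim (b.1.2 - 0) b.1.2, ih]
    simp [mapDomain_single]

lemma mgT_node (bs : List Branch) (kup k : MIdx 0) (l : Option ν) (c : List Branch) :
    mgT bs kup (.node k l c) =
      sumSplittings bs fun s => mapDomain (fun c' => .node k l (c' ++ s.1)) (mgL s.2 0 c) := by
  rw [mgT, sumSplittings]
  refine congrArg _ (List.map_congr_left fun s _ => ?_)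
  rw [MIdx.Icc_eq, Finset.sum_singleton, mgRoot_eq_single, sum_single_index (by simp), one_smul,
    Subsingleton.elim (k + 0) k, Subsingleton.elim (kup - 0) 0]

lemma mgL_nil (bs : List Branch) (kup : MIdx 0) :
    mgL bs kup [] = if bs = [] then single [] 1 else 0 := by
  simp [mgL, MIdx.eq_zero kup]

lemma mgL_cons (bs : List Branch) (kup : MIdx 0) (e : Θ × MIdx 0) (t : DT Θ ν 0)
    (ts : List Branch) :
    mgL bs kup ((e, t) :: ts) =
      sumSplittings bs fun s =>
        fcomb (fun t' ts' => (e, t') :: ts') (mgT s.1 0 t) (mgL s.2 0 ts) := by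
  rw [mgL, sumSplittings]
  refine congrArg _ (List.map_congr_left fun s _ => ?_)
  rw [MIdx.Icc_eq, Finset.sum_singleton, Subsingleton.elim (kup - 0) 0]

mutual

lemma mgT_nil (τ : DT Θ ν 0) : mgT [] 0 τ = δ τ := by
  obtain ⟨k, l, c⟩ := τ
  rw [mgT_node, sumSplittings_nil, mgL_nil_left c, mapDomain_single]
  simp [δ]
termination_by sizeOf τ
decreasing_by all_goals (simp; try omega)

lemma mgL_nil_left (c : List Branch) : mgL [] 0 c = single c 1 := by
  match c with
  | [] => simp [mgL_nil]
  | (e, t) :: ts =>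
    rw [mgL_cons, sumSplittings_nil, mgT_nil t, mgL_nil_left ts, δ, fcomb_eq_linearCombination]
    simp [mapDomain_single]
termination_by sizeOf c
decreasing_by all_goals (simp; try omega)

end

lemma δ_node_eq_mgT_zeta (k : MIdx 0) (l : Option ν) (br : List Branch) :
    δ (.node k l br) = mgT br 0 (zeta l) := by
  rw [zeta, mgT_node, sumSplittings_eq_of_zero_of_snd_ne_nil br _ fun p hp => by
      rw [mgL_nil, if_neg hp, mapDomain_zero],
    mgL_nil, if_pos rfl, mapDomain_single, List.nil_append, δ, MIdx.eq_zero k]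

lemma graftL_append (a : Θ × MIdx 0) (x : DT Θ ν 0) (u v : List Branch) :
    graftL a x (u ++ v) =
      mapDomain (· ++ v) (graftL a x u) + mapDomain (u ++ ·) (graftL a x v) := by
  induction u with
  | nil =>
    simp only [List.nil_append, graftL, mapDomain_zero, zero_add]
    exact mapDomain_id.symm
  | cons b u ih =>
    rw [List.cons_append, graftL, graftL, ih]
    simp only [mapDomain_add, ← mapDomain_comp, add_assoc]
    rfl

lemma length_of_mem_support_graftL (a : Θ × MIdx 0) (x : DT Θ ν 0) {bs u : List Branch}
    (hu : u ∈ (graftL a x bs).support) : u.length = bs.length := by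
  induction bs generalizing u with
  | nil => simp [graftL] at hu
  | cons b bs ih =>
    rw [graftL] at hu
    rcases Finset.mem_union.mp (support_add hu) with h | h
    · obtain ⟨w, _, rfl⟩ := Finset.mem_image.mp (mapDomain_support h)
      simp
    · obtain ⟨w, hw, rfl⟩ := Finset.mem_image.mp (mapDomain_support h)
      simp [ih hw]

lemma linearCombination_sumSplittings_graftL {M : Type*} [AddCommMonoid M] [Module ℚ M]
    (a : Θ × MIdx 0) (x : DT Θ ν 0) (bs : List Branch) (G : List Branch → List Branch → M) :
    lc (fun bs' => sumSplittings bs' fun s => G s.1 s.2) (graftL a x bs) =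
      sumSplittings bs fun s =>
        lc (fun u => G u s.2) (graftL a x s.1) + lc (fun v => G s.1 v) (graftL a x s.2) := by
  induction bs generalizing G with
  | nil => simp [graftL, sumSplittings_nil]
  | cons b bs ih =>
    rw [graftL, map_add, linearCombination_mapDomain, linearCombination_mapDomain]
    simp only [Function.comp_def, sumSplittings_cons]
    rw [linearCombination_sumSplittings, ih fun u v => G (b :: u) v + G u (b :: v),
      ← sumSplittings_add]
    refine sumSplittings_congr _ fun p => ?_
    simp only [linearCombination_add_fun, graftL, map_add, linearCombination_mapDomain,
      Function.comp_def]
    abel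

lemma graftT_mgT_node (a : Θ × MIdx 0) (x : DT Θ ν 0) (k : MIdx 0) (l : Option ν)
    (c : List Branch)
    (ih : ∀ bs : List Branch, lc (graftL a x) (mgL bs 0 c) =
      mgL (bs ++ [(a, x)]) 0 c + lc (fun bs' => mgL bs' 0 c) (graftL a x bs))
    (bs : List Branch) :
    lc (graftT a x) (mgT bs 0 (.node k l c)) =
      mgT (bs ++ [(a, x)]) 0 (.node k l c) +
        lc (fun bs' => mgT bs' 0 (.node k l c)) (graftL a x bs) := by
  simp only [mgT_node]
  rw [map_sumSplittings, sumSplittings_append_singleton,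
    linearCombination_sumSplittings_graftL a x bs
      fun u v => mapDomain (fun c' => DT.node k l (c' ++ u)) (mgL v 0 c),
    ← sumSplittings_add]
  refine sumSplittings_congr _ fun p => ?_
  -- `x` is grafted onto the root of `.node k l (c' ++ p.1)`, into `c'`, or into `p.1`
  simp only [linearCombination_mapDomain, Function.comp_def, graftT_node, graftL_append,
    mapDomain_add, ← mapDomain_comp, linearCombination_add_fun, δ]
  rw [linearCombination_single_one, ← mapDomain_linearCombination, ih p.2, mapDomain_add,
    mapDomain_linearCombination, linearCombination_mapDomain_comm]
  simp only [List.append_assoc]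
  abel

lemma graftL_fcomb_cons (a : Θ × MIdx 0) (x : DT Θ ν 0) (e : Θ × MIdx 0)
    (f : TT Θ ν 0) (g : List Branch →₀ ℚ) :
    lc (graftL a x) (fcomb (fun t ts => (e, t) :: ts) f g) =
      fcomb (fun t ts => (e, t) :: ts) (lc (graftT a x) f) g +
        fcomb (fun t ts => (e, t) :: ts) f (lc (graftL a x) g) := by
  simp only [fcomb_eq_linearCombination _ f, linearCombination_linearCombination,
    linearCombination_mapDomain, Function.comp_def, graftL, linearCombination_add_fun]
  rw [linearCombination_comm, fcomb_eq_linearCombination']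
  simp only [mapDomain_linearCombination]

lemma graftL_mgL_cons (a : Θ × MIdx 0) (x : DT Θ ν 0) (e : Θ × MIdx 0) (t : DT Θ ν 0)
    (ts : List Branch)
    (iht : ∀ bs : List Branch, lc (graftT a x) (mgT bs 0 t) =
      mgT (bs ++ [(a, x)]) 0 t + lc (fun bs' => mgT bs' 0 t) (graftL a x bs))
    (ihts : ∀ bs : List Branch, lc (graftL a x) (mgL bs 0 ts) =
      mgL (bs ++ [(a, x)]) 0 ts + lc (fun bs' => mgL bs' 0 ts) (graftL a x bs))
    (bs : List Branch) :
    lc (graftL a x) (mgL bs 0 ((e, t) :: ts)) =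
      mgL (bs ++ [(a, x)]) 0 ((e, t) :: ts) +
        lc (fun bs' => mgL bs' 0 ((e, t) :: ts)) (graftL a x bs) := by
  simp only [mgL_cons]
  rw [map_sumSplittings, sumSplittings_append_singleton,
    linearCombination_sumSplittings_graftL a x bs
      fun u v => fcomb (fun t ts => (e, t) :: ts) (mgT u 0 t) (mgL v 0 ts),
    ← sumSplittings_add]
  refine sumSplittings_congr _ fun p => ?_
  rw [graftL_fcomb_cons, iht, ihts, fcomb_add_left, fcomb_add_right,
    fcomb_linearCombination_left, fcomb_linearCombination_right]
  abel

lemma graftL_mgL_nil (a : Θ × MIdx 0) (x : DT Θ ν 0) (bs : List Branch) :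
    lc (graftL a x) (mgL bs 0 []) =
      mgL (bs ++ [(a, x)]) 0 [] + lc (fun bs' => mgL bs' 0 []) (graftL a x bs) := by
  rcases eq_or_ne bs [] with rfl | hbs
  · simp [mgL_nil, graftL]
  rw [mgL_nil, if_neg hbs, map_zero, mgL_nil, if_neg (by simp), zero_add, linearCombination_apply]
  refine (Finset.sum_eq_zero fun u hu => ?_).symm
  have hu : u ≠ [] := by
    rw [← List.length_pos_iff, length_of_mem_support_graftL a x hu, List.length_pos_iff]
    exact hbs
  simp only [mgL_nil, if_neg hu, smul_zero]

mutual

lemma graftT_mgT (a : Θ × MIdx 0) (x : DT Θ ν 0) (τ : DT Θ ν 0) (bs : List Branch) :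
    lc (graftT a x) (mgT bs 0 τ) =
      mgT (bs ++ [(a, x)]) 0 τ + lc (fun bs' => mgT bs' 0 τ) (graftL a x bs) := by
  obtain ⟨k, l, c⟩ := τ
  exact graftT_mgT_node a x k l c (graftL_mgL a x c) bs
termination_by sizeOf τ
decreasing_by simp

lemma graftL_mgL (a : Θ × MIdx 0) (x : DT Θ ν 0) (c : List Branch) (bs : List Branch) :
    lc (graftL a x) (mgL bs 0 c) =
      mgL (bs ++ [(a, x)]) 0 c + lc (fun bs' => mgL bs' 0 c) (graftL a x bs) := by
  match c with
  | [] => exact graftL_mgL_nil a x bs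
  | (e, t) :: ts => exact graftL_mgL_cons a x e t ts (graftT_mgT a x t) (graftL_mgL a x ts) bs
termination_by sizeOf c
decreasing_by all_goals (simp; try omega)

end

lemma graftT_linearCombination_mgT (a : Θ × MIdx 0) (x : DT Θ ν 0) (bs : List Branch)
    (v : TT Θ ν 0) :
    lc (graftT a x) (lc (mgT bs 0) v) =
      lc (mgT (bs ++ [(a, x)]) 0) v + lc (fun bs' => lc (mgT bs' 0) v) (graftL a x bs) := by
  simp only [linearCombination_linearCombination, graftT_mgT, linearCombination_add_fun]
  rw [linearCombination_comm]

lemma star_node (k : MIdx 0) (l : Option ν) (br : List Branch) (τ : DT Θ ν 0) :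
    star (.node k l br) τ = mgT br 0 τ := by
  show mgT br k τ = _
  rw [MIdx.eq_zero k]

section RightStarMorphism

variable (Rs : TT Θ ν 0 →ₗ[ℚ] TT Θ ν 0)
  (hgraft : ∀ (a : Θ × MIdx 0) (σ τ : DT Θ ν 0), Rs (graftT a σ τ) = graftR a σ (Rs (δ τ)))
include hgraft

lemma map_linearCombination_graftT (a : Θ × MIdx 0) (σ : DT Θ ν 0) (g : TT Θ ν 0) :
    Rs (lc (graftT a σ) g) = lc (graftT a σ) (Rs g) := by
  suffices Rs ∘ₗ lc (graftT a σ) = lc (graftT a σ) ∘ₗ Rs from LinearMap.congr_fun this g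
  refine Finsupp.lhom_ext' fun τ => LinearMap.ext_ring ?_
  simp only [LinearMap.comp_apply, lsingle_apply, linearCombination_single, one_smul]
  exact hgraft a σ τ

lemma map_mgT (bs : List Branch) (τ : DT Θ ν 0) :
    Rs (mgT bs 0 τ) = lc (mgT bs 0) (Rs (δ τ)) := by
  obtain ⟨n, hn⟩ : ∃ n, bs.length = n := ⟨_, rfl⟩
  induction n generalizing bs with
  | zero =>
    rw [List.length_eq_zero_iff.mp hn, mgT_nil, funext mgT_nil, linearCombination_δ_self]
  | succ n ih =>
    rcases bs.eq_nil_or_concat with rfl | ⟨bs, ⟨a, x⟩, rfl⟩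
    · simp at hn
    have hlen : bs.length = n := by simpa using hn
    have hcorr : Rs (lc (fun bs' => mgT bs' 0 τ) (graftL a x bs)) =
        lc (fun bs' => lc (mgT bs' 0) (Rs (δ τ))) (graftL a x bs) := by
      rw [apply_linearCombination]
      exact linearCombination_congr fun bs' hbs' =>
        ih bs' ((length_of_mem_support_graftL a x hbs').trans hlen)
    rw [List.concat_eq_append, eq_sub_of_add_eq (graftT_mgT a x τ bs).symm, map_sub,
      map_linearCombination_graftT Rs hgraft, ih bs hlen, hcorr,
      graftT_linearCombination_mgT, add_sub_cancel_right]

lemma map_star (σ τ : DT Θ ν 0) : Rs (star σ τ) = starR σ (Rs (δ τ)) := by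
  obtain ⟨k, l, br⟩ := σ
  rw [star_node, map_mgT Rs hgraft]
  exact linearCombination_congr fun t _ => (star_node k l br t).symm

end RightStarMorphism

/-- `graftLift ρ` sends `br ⋆ ζ_l`, which is any tree by `δ_node_eq_mgT_zeta`, to `br ⋆ ρ l`. -/
noncomputable def graftLift (ρ : Option ν → TT Θ ν 0) : TT Θ ν 0 →ₗ[ℚ] TT Θ ν 0 :=
  lc fun τ => match τ with
    | .node _ l br => lc (mgT br 0) (ρ l)

lemma graftLift_δ_node (ρ : Option ν → TT Θ ν 0) (k : MIdx 0) (l : Option ν) (br : List Branch) :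
    graftLift ρ (δ (.node k l br)) = lc (mgT br 0) (ρ l) :=
  linearCombination_δ _ _

lemma graftLift_zeta (ρ : Option ν → TT Θ ν 0) (l : Option ν) : graftLift ρ (δ (zeta l)) = ρ l := by
  rw [zeta, graftLift_δ_node, funext mgT_nil, linearCombination_δ_self]

lemma graftLift_graftT (ρ : Option ν → TT Θ ν 0) (a : Θ × MIdx 0) (σ τ : DT Θ ν 0) :
    graftLift ρ (graftT a σ τ) = graftR a σ (graftLift ρ (δ τ)) := by
  obtain ⟨k, l, br⟩ := τ
  rw [graftT_node, map_add, graftLift_δ_node, graftLift, linearCombination_mapDomain,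
    ← graftLift, graftLift_δ_node]
  exact (graftT_linearCombination_mgT a σ br (ρ l)).symm

lemma eq_graftLift (Rs : TT Θ ν 0 →ₗ[ℚ] TT Θ ν 0)
    (hgraft : ∀ (a : Θ × MIdx 0) (σ τ : DT Θ ν 0), Rs (graftT a σ τ) = graftR a σ (Rs (δ τ))) :
    Rs = graftLift fun l => Rs (δ (zeta l)) := by
  refine Finsupp.lhom_ext' fun τ => LinearMap.ext_ring ?_
  obtain ⟨k, l, br⟩ := τ
  change Rs (δ _) = graftLift _ (δ _)
  rw [graftLift_δ_node, δ_node_eq_mgT_zeta, map_mgT Rs hgraft]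

/-- Corollary 3.7: in the Butcher–Connes–Kreimer setting (no
polynomial decorations, encoded by `dd = 0`, so there is no deformation), given
a linear map `M` whose adjoint `M*` is a multi-pre-Lie morphism, the
prescription `R*(ζ_l) := M*(ζ_l)`, `R*(σ ↷_a τ) := σ ↷_a (R* τ)` defines a
unique linear map `R*`, and any such map is a right `⋆`-morphism:
`R*(σ ⋆ τ) = σ ⋆ R*(τ)`. -/
theorem stmt_16 {Θ ν : Type} (M Ms : TT Θ ν 0 →ₗ[ℚ] TT Θ ν 0)
    -- Ms = M* is the adjoint of M for the pairing ⟨σ,τ⟩ = S(τ)1_{σ=τ}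
    (hadj : ∀ f g : TT Θ ν 0, pairT (Ms f) g = pairT f (M g))
    -- M* is a multi-pre-Lie morphism
    (hpre : ∀ (a : Θ × MIdx 0) (σ τ : DT Θ ν 0),
      Ms (graftT a σ τ) = graftExt a (Ms (δ σ)) (Ms (δ τ))) :
    -- R* is well-defined by its values on the generators and the graft rule ...
    (∃! Rs : TT Θ ν 0 →ₗ[ℚ] TT Θ ν 0,
      (∀ l : Option ν, Rs (δ (zeta l)) = Ms (δ (zeta l))) ∧
      (∀ (a : Θ × MIdx 0) (σ τ : DT Θ ν 0),
        Rs (graftT a σ τ) = graftR a σ (Rs (δ τ)))) ∧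
    -- ... and any such map is a right ⋆-morphism
    (∀ Rs : TT Θ ν 0 →ₗ[ℚ] TT Θ ν 0,
      ((∀ l : Option ν, Rs (δ (zeta l)) = Ms (δ (zeta l))) ∧
       (∀ (a : Θ × MIdx 0) (σ τ : DT Θ ν 0),
        Rs (graftT a σ τ) = graftR a σ (Rs (δ τ)))) →
      ∀ σ τ : DT Θ ν 0, noiseFreeRoot σ → Rs (star σ τ) = starR σ (Rs (δ τ))) := by
  refine ⟨⟨graftLift fun l => Ms (δ (zeta l)), ⟨graftLift_zeta _, graftLift_graftT _⟩, ?_⟩,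
    fun Rs h σ τ _ => map_star Rs h.2 σ τ⟩
  rintro Rs ⟨hzeta, hgraft⟩
  rw [eq_graftLift Rs hgraft]
  simp only [hzeta]
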